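/- arXiv:2211.03887 — 8 statements merged into one kernel-verified Lean document; each statement's English description precedes it below -/
import Mathlib

section
/- Let r, z : ℝ² → ℝ be smooth functions (of variables (t,φ)) satisfying ∂ₜr·∂_φr + ∂ₜz·∂_φz = 0 and (∂ₜr)² + (∂ₜz)² + r²((∂_φr)² + (∂_φz)²) = 1 on an open set where ∂ₜr·∂_φz - ∂_φr·∂ₜz ≠ 0. Then on that set z satisfies the second-order equation ∂ₜ²z = ∂_φ(r²·∂_φz). -/
noncomputable def pd1 (f : ℝ × ℝ → ℝ) (p : ℝ × ℝ) : ℝ := fderiv ℝ f p (1, 0)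
noncomputable def pd2 (f : ℝ × ℝ → ℝ) (p : ℝ × ℝ) : ℝ := fderiv ℝ f p (0, 1)

lemma pdv_hasFDerivAt (f : ℝ × ℝ → ℝ) (hf : ContDiff ℝ (⊤ : ℕ∞) f) (v p : ℝ × ℝ) :
    HasFDerivAt (fun q => fderiv ℝ f q v)
      ((ContinuousLinearMap.apply ℝ ℝ v).comp (fderiv ℝ (fderiv ℝ f) p)) p := by
  have h2 : DifferentiableAt ℝ (fderiv ℝ f) p :=
    ((hf.fderiv_right (m := 1) (WithTop.coe_le_coe.mpr le_top)).differentiable one_ne_zero) p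
  exact ((ContinuousLinearMap.apply ℝ ℝ v).hasFDerivAt).comp p h2.hasFDerivAt

lemma pd_symm (f : ℝ × ℝ → ℝ) (hf : ContDiff ℝ (⊤ : ℕ∞) f) (p v w : ℝ × ℝ) :
    fderiv ℝ (fderiv ℝ f) p v w = fderiv ℝ (fderiv ℝ f) p w v := by
  apply second_derivative_symmetric (f := f)
  · intro y
    exact ((hf.differentiable (by simp)) y).hasFDerivAt
  · exact (((hf.fderiv_right (m := 1) (WithTop.coe_le_coe.mpr le_top)).differentiable one_ne_zero) p).hasFDerivAt

theorem stmt_0 (r z : ℝ × ℝ → ℝ) (U : Set (ℝ × ℝ)) (hU : IsOpen U)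
    (hr : ContDiff ℝ (⊤ : ℕ∞) r) (hz : ContDiff ℝ (⊤ : ℕ∞) z)
    (h1 : ∀ p ∈ U, pd1 r p * pd2 r p + pd1 z p * pd2 z p = 0)
    (h2 : ∀ p ∈ U, (pd1 r p) ^ 2 + (pd1 z p) ^ 2
        + (r p) ^ 2 * ((pd2 r p) ^ 2 + (pd2 z p) ^ 2) = 1)
    (h3 : ∀ p ∈ U, pd1 r p * pd2 z p - pd2 r p * pd1 z p ≠ 0) :
    ∀ p ∈ U, pd1 (pd1 z) p = pd2 (fun q => (r q) ^ 2 * pd2 z q) p := by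
  intro p hp
  simp only [pd1, pd2] at h1 h2 h3
  show fderiv ℝ (fun q => fderiv ℝ z q (1, 0)) p (1, 0)
      = fderiv ℝ (fun q => (r q) ^ 2 * fderiv ℝ z q (0, 1)) p (0, 1)
  have ha1 := pdv_hasFDerivAt r hr (1, 0) p
  have ha2 := pdv_hasFDerivAt r hr (0, 1) p
  have hb1 := pdv_hasFDerivAt z hz (1, 0) p
  have hb2 := pdv_hasFDerivAt z hz (0, 1) p
  have hrp : HasFDerivAt r (fderiv ℝ r p) p := ((hr.differentiable (by simp)) p).hasFDerivAt
  -- constraint 1 has zero derivative at p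
  have hG1 : HasFDerivAt
      (fun q => fderiv ℝ r q (1, 0) * fderiv ℝ r q (0, 1)
        + fderiv ℝ z q (1, 0) * fderiv ℝ z q (0, 1)) (0 : ℝ × ℝ →L[ℝ] ℝ) p := by
    have h0 : (fun q => fderiv ℝ r q (1, 0) * fderiv ℝ r q (0, 1)
        + fderiv ℝ z q (1, 0) * fderiv ℝ z q (0, 1)) =ᶠ[nhds p] (fun _ => (0 : ℝ)) :=
      Filter.eventuallyEq_of_mem (hU.mem_nhds hp) h1
    exact (hasFDerivAt_const (0 : ℝ) p).congr_of_eventuallyEq h0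
  have hG1' := (ha1.mul ha2).add (hb1.mul hb2)
  have e0 := hG1'.unique hG1
  -- constraint 2 (written with products) has zero derivative at p
  have hG2 : HasFDerivAt
      (fun q => (fderiv ℝ r q (1, 0) * fderiv ℝ r q (1, 0)
          + fderiv ℝ z q (1, 0) * fderiv ℝ z q (1, 0))
        + (r q * r q) * (fderiv ℝ r q (0, 1) * fderiv ℝ r q (0, 1)
          + fderiv ℝ z q (0, 1) * fderiv ℝ z q (0, 1))) (0 : ℝ × ℝ →L[ℝ] ℝ) p := by
    have h0 : (fun q => (fderiv ℝ r q (1, 0) * fderiv ℝ r q (1, 0)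
          + fderiv ℝ z q (1, 0) * fderiv ℝ z q (1, 0))
        + (r q * r q) * (fderiv ℝ r q (0, 1) * fderiv ℝ r q (0, 1)
          + fderiv ℝ z q (0, 1) * fderiv ℝ z q (0, 1))) =ᶠ[nhds p] (fun _ => (1 : ℝ)) :=
      Filter.eventuallyEq_of_mem (hU.mem_nhds hp) (fun q hq => by linear_combination h2 q hq)
    exact (hasFDerivAt_const (1 : ℝ) p).congr_of_eventuallyEq h0
  have hG2' := ((ha1.mul ha1).add (hb1.mul hb1)).add ((hrp.mul hrp).mul ((ha2.mul ha2).add (hb2.mul hb2)))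
  have f0 := hG2'.unique hG2
  -- evaluate the four equations
  have E1 := congrArg (fun L : ℝ × ℝ →L[ℝ] ℝ => L (1, 0)) e0
  have E2 := congrArg (fun L : ℝ × ℝ →L[ℝ] ℝ => L (0, 1)) e0
  have E3 := congrArg (fun L : ℝ × ℝ →L[ℝ] ℝ => L (1, 0)) f0
  have E4 := congrArg (fun L : ℝ × ℝ →L[ℝ] ℝ => L (0, 1)) f0
  simp only [ContinuousLinearMap.add_apply, ContinuousLinearMap.smul_apply,
    ContinuousLinearMap.coe_comp', Function.comp_apply, ContinuousLinearMap.apply_apply,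
    smul_eq_mul, ContinuousLinearMap.zero_apply, Pi.mul_apply, Pi.add_apply] at E1 E2 E3 E4
  -- symmetry of second derivatives
  have Sr := pd_symm r hr p (0, 1) (1, 0)
  have Sz := pd_symm z hz p (0, 1) (1, 0)
  rw [Sr, Sz] at E2 E4
  have hA := h1 p hp
  have hJ := h3 p hp
  -- rewrite the goal in terms of second derivatives
  rw [hb1.fderiv]
  have heq : (fun q => (r q) ^ 2 * fderiv ℝ z q (0, 1))
      = (fun q => (r q * r q) * fderiv ℝ z q (0, 1)) := funext fun q => by rw [pow_two]
  have hF : HasFDerivAt (fun q => (r q * r q) * fderiv ℝ z q (0, 1)) _ p := (hrp.mul hrp).mul hb2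
  rw [heq, hF.fderiv]
  simp only [ContinuousLinearMap.add_apply, ContinuousLinearMap.smul_apply,
    ContinuousLinearMap.coe_comp', Function.comp_apply, ContinuousLinearMap.apply_apply,
    smul_eq_mul, Pi.mul_apply]
  apply mul_left_cancel₀ hJ
  linear_combination (fderiv ℝ r p (1, 0)) * E1 - (fderiv ℝ r p (1, 0) / 2) * E4
    - (fderiv ℝ r p (0, 1) / 2) * E3
    + (r p * r p) * (fderiv ℝ r p (0, 1)) * E2
    + 2 * (r p) * (fderiv ℝ r p (0, 1)) ^ 2 * hA
end

section
/- Let r, z : ℝ² → ℝ be smooth functions satisfying ∂ₜr·∂_φr + ∂ₜz·∂_φz = 0 and (∂ₜr)² + (∂ₜz)² + r²((∂_φr)² + (∂_φz)²) = 1 on an open set where ∂ₜr·∂_φz - ∂_φr·∂ₜz ≠ 0. Then on that set r satisfies ∂ₜ²r = ∂_φ(r²·∂_φr) - r·((∂_φr)² + (∂_φz)²). -/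
private lemma contDiff_pdv {f : ℝ×ℝ→ℝ} (hf : ContDiff ℝ (⊤ : ℕ∞) f) (v : ℝ×ℝ) :
    ContDiff ℝ (⊤ : ℕ∞) (fun p => fderiv ℝ f p v) :=
  (ContinuousLinearMap.apply ℝ ℝ v).contDiff.comp (hf.fderiv_right (by simp))

private lemma pdv_mul {f g : ℝ×ℝ→ℝ} {p v : ℝ×ℝ} (hf : DifferentiableAt ℝ f p)
    (hg : DifferentiableAt ℝ g p) :
    fderiv ℝ (fun q => f q * g q) p v = fderiv ℝ f p v * g p + f p * fderiv ℝ g p v := by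
  rw [fderiv_fun_mul hf hg]
  simp [ContinuousLinearMap.add_apply, ContinuousLinearMap.smul_apply]
  ring

private lemma pdv_add {f g : ℝ×ℝ→ℝ} {p v : ℝ×ℝ} (hf : DifferentiableAt ℝ f p)
    (hg : DifferentiableAt ℝ g p) :
    fderiv ℝ (fun q => f q + g q) p v = fderiv ℝ f p v + fderiv ℝ g p v := by
  rw [fderiv_fun_add hf hg]; rfl

private lemma pdv_sq {f : ℝ×ℝ→ℝ} {p v : ℝ×ℝ} (hf : DifferentiableAt ℝ f p) :
    fderiv ℝ (fun q => f q ^ 2) p v = 2 * f p * fderiv ℝ f p v := by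
  have : (fun q => f q ^ 2) = fun q => f q * f q := by ext q; ring
  rw [this, pdv_mul hf hf]; ring

-- second fderiv applied
private lemma pdv_pdv {f : ℝ×ℝ→ℝ} (hf : ContDiff ℝ (⊤ : ℕ∞) f) (p v w : ℝ×ℝ) :
    fderiv ℝ (fun q => fderiv ℝ f q v) p w = fderiv ℝ (fderiv ℝ f) p w v := by
  have h1 : DifferentiableAt ℝ (fderiv ℝ f) p :=
    ((hf.fderiv_right (m := (⊤ : ℕ∞)) (by simp)).differentiable (by simp)) p
  have : HasFDerivAt (fun q => fderiv ℝ f q v)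
      ((ContinuousLinearMap.apply ℝ ℝ v).comp (fderiv ℝ (fderiv ℝ f) p)) p :=
    (ContinuousLinearMap.apply ℝ ℝ v).hasFDerivAt.comp p h1.hasFDerivAt
  rw [this.fderiv]; rfl

private lemma pdv_symm {f : ℝ×ℝ→ℝ} (hf : ContDiff ℝ (⊤ : ℕ∞) f) (p v w : ℝ×ℝ) :
    fderiv ℝ (fun q => fderiv ℝ f q v) p w = fderiv ℝ (fun q => fderiv ℝ f q w) p v := by
  rw [pdv_pdv hf, pdv_pdv hf]
  have hd : ∀ y, HasFDerivAt f (fderiv ℝ f y) y :=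
    fun y => ((hf.differentiable (by simp)) y).hasFDerivAt
  have h2 : HasFDerivAt (fderiv ℝ f) (fderiv ℝ (fderiv ℝ f) p) p :=
    (((hf.fderiv_right (m := (⊤ : ℕ∞)) (by simp)).differentiable (by simp)) p).hasFDerivAt
  exact second_derivative_symmetric hd h2 w v

theorem stmt_1 (r z : ℝ × ℝ → ℝ) (U : Set (ℝ × ℝ)) (hU : IsOpen U)
    (hr : ContDiff ℝ (⊤ : ℕ∞) r) (hz : ContDiff ℝ (⊤ : ℕ∞) z)
    (h1 : ∀ p ∈ U, pd1 r p * pd2 r p + pd1 z p * pd2 z p = 0)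
    (h2 : ∀ p ∈ U, (pd1 r p) ^ 2 + (pd1 z p) ^ 2
        + (r p) ^ 2 * ((pd2 r p) ^ 2 + (pd2 z p) ^ 2) = 1)
    (h3 : ∀ p ∈ U, pd1 r p * pd2 z p - pd2 r p * pd1 z p ≠ 0) :
    ∀ p ∈ U, pd1 (pd1 r) p = pd2 (fun q => (r q) ^ 2 * pd2 r q) p
        - r p * ((pd2 r p) ^ 2 + (pd2 z p) ^ 2) := by
  intro p hp
  -- differentiability facts
  have dr : Differentiable ℝ r := hr.differentiable (by simp)
  have dz : Differentiable ℝ z := hz.differentiable (by simp)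
  have d1r : Differentiable ℝ (pd1 r) := (contDiff_pdv hr (1,0)).differentiable (by simp)
  have d2r : Differentiable ℝ (pd2 r) := (contDiff_pdv hr (0,1)).differentiable (by simp)
  have d1z : Differentiable ℝ (pd1 z) := (contDiff_pdv hz (1,0)).differentiable (by simp)
  have d2z : Differentiable ℝ (pd2 z) := (contDiff_pdv hz (0,1)).differentiable (by simp)
  -- abbreviations
  set a := pd1 r p with ha
  set b := pd2 r p with hb
  set c := pd1 z p with hc
  set d := pd2 z p with hd
  -- derivative of a function vanishing on U
  have vanish : ∀ g : ℝ×ℝ→ℝ, (∀ q ∈ U, g q = 0) → fderiv ℝ g p = 0 := by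
    intro g hg
    have he : g =ᶠ[nhds p] (fun _ => (0:ℝ)) := by
      filter_upwards [hU.mem_nhds hp] with q hq using hg q hq
    rw [he.fderiv_eq, fderiv_fun_const]; rfl
  -- equations from differentiating h1
  have hg1 : fderiv ℝ (fun q => pd1 r q * pd2 r q + pd1 z q * pd2 z q) p = 0 := by
    apply vanish; exact h1
  have exp1 : ∀ v : ℝ×ℝ,
      fderiv ℝ (pd1 r) p v * b + a * fderiv ℝ (pd2 r) p v
      + (fderiv ℝ (pd1 z) p v * d + c * fderiv ℝ (pd2 z) p v) = 0 := by
    intro v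
    have := congrArg (fun L : (ℝ×ℝ) →L[ℝ] ℝ => L v) hg1
    rw [pdv_add ((d1r p).fun_mul (d2r p)) ((d1z p).fun_mul (d2z p)),
        pdv_mul (d1r p) (d2r p), pdv_mul (d1z p) (d2z p)] at this
    simpa using this
  -- equations from differentiating h2
  have hg2 : fderiv ℝ (fun q => pd1 r q ^ 2 + pd1 z q ^ 2
      + r q ^ 2 * (pd2 r q ^ 2 + pd2 z q ^ 2) - 1) p = 0 := by
    apply vanish; intro q hq; have := h2 q hq; linarith
  have exp2 : ∀ v : ℝ×ℝ,
      2 * a * fderiv ℝ (pd1 r) p v + 2 * c * fderiv ℝ (pd1 z) p v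
      + (2 * r p * fderiv ℝ r p v * (b^2 + d^2)
        + r p ^ 2 * (2 * b * fderiv ℝ (pd2 r) p v + 2 * d * fderiv ℝ (pd2 z) p v)) = 0 := by
    intro v
    have := congrArg (fun L : (ℝ×ℝ) →L[ℝ] ℝ => L v) hg2
    rw [fderiv_sub_const] at this
    rw [pdv_add (((d1r p).fun_pow 2).fun_add ((d1z p).fun_pow 2))
          (((dr p).fun_pow 2).fun_mul (((d2r p).fun_pow 2).fun_add ((d2z p).fun_pow 2))),
        pdv_add ((d1r p).fun_pow 2) ((d1z p).fun_pow 2),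
        pdv_mul ((dr p).fun_pow 2) (((d2r p).fun_pow 2).fun_add ((d2z p).fun_pow 2)),
        pdv_sq (d1r p), pdv_sq (d1z p), pdv_sq (dr p),
        pdv_add ((d2r p).fun_pow 2) ((d2z p).fun_pow 2), pdv_sq (d2r p), pdv_sq (d2z p)] at this
    rw [ContinuousLinearMap.zero_apply] at this
    linarith [this]
  -- second derivative names
  set A11 := fderiv ℝ (pd1 r) p (1,0) with hA11
  set A12 := fderiv ℝ (pd2 r) p (1,0) with hA12
  set A22 := fderiv ℝ (pd2 r) p (0,1) with hA22
  set C11 := fderiv ℝ (pd1 z) p (1,0) with hC11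
  set C12 := fderiv ℝ (pd2 z) p (1,0) with hC12
  set C22 := fderiv ℝ (pd2 z) p (0,1) with hC22
  -- symmetry of mixed partials
  have symr : fderiv ℝ (pd1 r) p (0,1) = A12 := by
    rw [hA12]; exact pdv_symm hr p (1,0) (0,1)
  have symz : fderiv ℝ (pd1 z) p (0,1) = C12 := by
    rw [hC12]; exact pdv_symm hz p (1,0) (0,1)
  have E1 := exp1 (1,0)
  have E2 := exp1 (0,1)
  rw [symr, symz] at E2
  have E3 := exp2 (1,0)
  have E4 := exp2 (0,1)
  rw [symr, symz] at E4
  -- fderiv r p (1,0) = a , (0,1) = b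
  have hra : fderiv ℝ r p (1,0) = a := rfl
  have hrb : fderiv ℝ r p (0,1) = b := rfl
  rw [hra] at E3
  rw [hrb] at E4
  -- compute the RHS second derivative term
  have hRHS : pd2 (fun q => (r q) ^ 2 * pd2 r q) p = 2 * r p * b * b + r p ^ 2 * A22 := by
    show fderiv ℝ (fun q => (r q)^2 * pd2 r q) p (0,1) = _
    rw [pdv_mul ((dr p).fun_pow 2) (d2r p), pdv_sq (dr p), hrb]
  rw [hRHS]
  show A11 = 2 * r p * b * b + r p ^2 * A22 - r p * (b^2 + d^2)
  -- nondegeneracy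
  have hJ : a * d - b * c ≠ 0 := h3 p hp
  have hJ' : b * c - a * d ≠ 0 := by intro h; apply hJ; linarith
  have h1p : a * b + c * d = 0 := h1 p hp
  have key : (b * c - a * d) * (A11 - (2 * r p * b * b + r p ^2 * A22 - r p * (b^2 + d^2))) = 0 := by
    linear_combination c * E1 - (c/2) * E4 - (d/2) * E3 + d * r p ^ 2 * E2
      + 2 * b * d * r p * h1p
  have := mul_eq_zero.mp key
  rcases this with h | h
  · exact absurd h hJ'
  · linarith
end

section
/- Theorem 1 (composition of 'r-holomorphic' maps): Let r, x, y, T, φ̃ : ℝ² → ℝ be smooth functions of (t,φ) satisfying ∂_φx = ∂ₜy, ∂ₜx = r²·∂_φy, ∂_φφ̃ = ∂ₜT, ∂ₜφ̃ = r²·∂_φT. Suppose X, Y, R̂ are smooth functions of (T,φ̃) with X(T(t,φ),φ̃(t,φ)) = x(t,φ), Y(T(t,φ),φ̃(t,φ)) = y(t,φ), R̂(T(t,φ),φ̃(t,φ)) = r(t,φ), and suppose (∂ₜT)² - r²(∂_φT)² ≠ 0. Then ∂_φ̃X = ∂_TY and ∂_TX = R̂²·∂_φ̃Y hold at the corresponding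 points. -/
lemma pd_apply (f : ℝ × ℝ → ℝ) (q : ℝ × ℝ) (u w : ℝ) :
    fderiv ℝ f q (u, w) = u * pd1 f q + w * pd2 f q := by
  have h : (u, w) = u • ((1:ℝ), (0:ℝ)) + w • ((0:ℝ), (1:ℝ)) := by
    simp [Prod.ext_iff]
  rw [h, map_add, map_smul, map_smul]
  simp [pd1, pd2, smul_eq_mul]

lemma chain_rule (T Φ X xf : ℝ × ℝ → ℝ)
    (hT : Differentiable ℝ T) (hΦ : Differentiable ℝ Φ) (hX : Differentiable ℝ X)
    (hcomp : ∀ p, X (T p, Φ p) = xf p) (p : ℝ × ℝ) (v : ℝ × ℝ) :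
    fderiv ℝ xf p v = fderiv ℝ X (T p, Φ p) (fderiv ℝ T p v, fderiv ℝ Φ p v) := by
  have hg : HasFDerivAt (fun p => (T p, Φ p)) ((fderiv ℝ T p).prod (fderiv ℝ Φ p)) p :=
    HasFDerivAt.prodMk (hT p).hasFDerivAt (hΦ p).hasFDerivAt
  have h := ((hX (T p, Φ p)).hasFDerivAt.comp p hg)
  have hx : (X ∘ fun p => (T p, Φ p)) = xf := funext hcomp
  rw [hx] at h
  rw [h.fderiv]
  rfl

theorem stmt_3 (r x y T Φ X Y Rhat : ℝ × ℝ → ℝ)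
    (hr : ContDiff ℝ (⊤ : ℕ∞) r) (hx : ContDiff ℝ (⊤ : ℕ∞) x) (hy : ContDiff ℝ (⊤ : ℕ∞) y)
    (hT : ContDiff ℝ (⊤ : ℕ∞) T) (hΦ : ContDiff ℝ (⊤ : ℕ∞) Φ)
    (hX : ContDiff ℝ (⊤ : ℕ∞) X) (hY : ContDiff ℝ (⊤ : ℕ∞) Y) (hRhat : ContDiff ℝ (⊤ : ℕ∞) Rhat)
    (h10a : ∀ p, pd2 x p = pd1 y p)
    (h10b : ∀ p, pd1 x p = (r p) ^ 2 * pd2 y p)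
    (h11a : ∀ p, pd2 Φ p = pd1 T p)
    (h11b : ∀ p, pd1 Φ p = (r p) ^ 2 * pd2 T p)
    (hXx : ∀ p, X (T p, Φ p) = x p)
    (hYy : ∀ p, Y (T p, Φ p) = y p)
    (hRr : ∀ p, Rhat (T p, Φ p) = r p)
    (hinv : ∀ p, (pd1 T p) ^ 2 - (r p) ^ 2 * (pd2 T p) ^ 2 ≠ 0) :
    ∀ p : ℝ × ℝ, pd2 X (T p, Φ p) = pd1 Y (T p, Φ p) ∧
      pd1 X (T p, Φ p) = (Rhat (T p, Φ p)) ^ 2 * pd2 Y (T p, Φ p) := by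
  intro p
  have hT' := hT.differentiable (by simp)
  have hΦ' := hΦ.differentiable (by simp)
  have hX' := hX.differentiable (by simp)
  have hY' := hY.differentiable (by simp)
  have hx1 : pd1 x p = pd1 T p * pd1 X (T p, Φ p) +
      (r p ^ 2 * pd2 T p) * pd2 X (T p, Φ p) := by
    have h := chain_rule T Φ X x hT' hΦ' hX' hXx p (1, 0)
    rw [pd_apply X] at h
    rw [show fderiv ℝ Φ p (1, 0) = pd1 Φ p from rfl, h11b p] at h
    exact h
  have hx2 : pd2 x p = pd2 T p * pd1 X (T p, Φ p) + pd1 T p * pd2 X (T p, Φ p) := by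
    have h := chain_rule T Φ X x hT' hΦ' hX' hXx p (0, 1)
    rw [pd_apply X] at h
    rw [show fderiv ℝ Φ p (0, 1) = pd2 Φ p from rfl, h11a p] at h
    exact h
  have hy1 : pd1 y p = pd1 T p * pd1 Y (T p, Φ p) +
      (r p ^ 2 * pd2 T p) * pd2 Y (T p, Φ p) := by
    have h := chain_rule T Φ Y y hT' hΦ' hY' hYy p (1, 0)
    rw [pd_apply Y] at h
    rw [show fderiv ℝ Φ p (1, 0) = pd1 Φ p from rfl, h11b p] at h
    exact h
  have hy2 : pd2 y p = pd2 T p * pd1 Y (T p, Φ p) + pd1 T p * pd2 Y (T p, Φ p) := by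
    have h := chain_rule T Φ Y y hT' hΦ' hY' hYy p (0, 1)
    rw [pd_apply Y] at h
    rw [show fderiv ℝ Φ p (0, 1) = pd2 Φ p from rfl, h11a p] at h
    exact h
  have E1 := h10a p
  have E2 := h10b p
  rw [hx2, hy1] at E1
  rw [hx1, hy2] at E2
  have hdet := hinv p
  have hu : (pd1 T p ^ 2 - r p ^ 2 * pd2 T p ^ 2) *
      (pd2 X (T p, Φ p) - pd1 Y (T p, Φ p)) = 0 := by
    linear_combination pd1 T p * E1 - pd2 T p * E2
  have hv : (pd1 T p ^ 2 - r p ^ 2 * pd2 T p ^ 2) *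
      (pd1 X (T p, Φ p) - r p ^ 2 * pd2 Y (T p, Φ p)) = 0 := by
    linear_combination pd1 T p * E2 - r p ^ 2 * pd2 T p * E1
  have h1 : pd2 X (T p, Φ p) = pd1 Y (T p, Φ p) := by
    have := (mul_eq_zero.mp hu).resolve_left hdet; linarith
  have h2 : pd1 X (T p, Φ p) = r p ^ 2 * pd2 Y (T p, Φ p) := by
    have := (mul_eq_zero.mp hv).resolve_left hdet; linarith
  exact ⟨h1, by rw [hRr p]; exact h2⟩
end

section
/- Theorem 2 (Bianchi-type involution): Let R, ζ, κ : ℝ² → ℝ be smooth functions of (τ,μ) satisfying ∂_τζ = (1/2)((∂_τR)² + R²(∂_μR)²), ∂_μζ = ∂_τR·∂_μR, ∂_μκ = ∂_τζ, ∂_τκ = R²·∂_μζ, on an open set where L := (1/2)((∂_τR)² − R²(∂_μR)²) ≠ 0. If ρ is a smooth function of (ζ,κ) with ρ(ζ(τ,μ),κ(τ,μ)) = R(τ,μ), then ρ satisfies ∂_ζ²ρ = ρ·∂_κ(ρ·∂_κρ) at the corresponding points. -/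
lemma fderiv_pt (g : ℝ × ℝ → ℝ) (q : ℝ × ℝ) (u v : ℝ) :
    fderiv ℝ g q (u, v) = u * pd1 g q + v * pd2 g q := by
  have h : ((u, v) : ℝ × ℝ) = u • ((1:ℝ), (0:ℝ)) + v • ((0:ℝ), (1:ℝ)) := by
    simp [Prod.ext_iff]
  rw [h, map_add, map_smul, map_smul, pd1, pd2, smul_eq_mul, smul_eq_mul]

lemma contDiff_pd1 {g : ℝ × ℝ → ℝ} (hg : ContDiff ℝ (⊤ : ℕ∞) g) : ContDiff ℝ (⊤ : ℕ∞) (pd1 g) :=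
  (hg.fderiv_right (by simp)).clm_apply contDiff_const

lemma contDiff_pd2 {g : ℝ × ℝ → ℝ} (hg : ContDiff ℝ (⊤ : ℕ∞) g) : ContDiff ℝ (⊤ : ℕ∞) (pd2 g) :=
  (hg.fderiv_right (by simp)).clm_apply contDiff_const

lemma diff_pd1 {g : ℝ × ℝ → ℝ} (hg : ContDiff ℝ (⊤ : ℕ∞) g) : Differentiable ℝ (pd1 g) :=
  (contDiff_pd1 hg).differentiable (by simp)

lemma diff_pd2 {g : ℝ × ℝ → ℝ} (hg : ContDiff ℝ (⊤ : ℕ∞) g) : Differentiable ℝ (pd2 g) :=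
  (contDiff_pd2 hg).differentiable (by simp)

lemma pd_congr {U : Set (ℝ × ℝ)} (hU : IsOpen U) {g h : ℝ × ℝ → ℝ}
    (he : ∀ x ∈ U, g x = h x) {p : ℝ × ℝ} (hp : p ∈ U) : fderiv ℝ g p = fderiv ℝ h p :=
  Filter.EventuallyEq.fderiv_eq (Filter.eventuallyEq_of_mem (hU.mem_nhds hp) he)

lemma fderiv_mul_pt {g h : ℝ × ℝ → ℝ} {p : ℝ × ℝ} (hg : DifferentiableAt ℝ g p)
    (hh : DifferentiableAt ℝ h p) (v : ℝ × ℝ) :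
    fderiv ℝ (fun x => g x * h x) p v = fderiv ℝ g p v * h p + g p * fderiv ℝ h p v := by
  rw [fderiv_fun_mul hg hh]
  simp [smul_eq_mul]
  ring

lemma fderiv_neg_pt (g : ℝ × ℝ → ℝ) (p : ℝ × ℝ) (v : ℝ × ℝ) :
    fderiv ℝ (fun x => -(g x)) p v = -(fderiv ℝ g p v) := by
  rw [fderiv_fun_neg]; simp

lemma pd_comp (g Z K : ℝ × ℝ → ℝ) (hg : ContDiff ℝ (⊤ : ℕ∞) g) (hZ : ContDiff ℝ (⊤ : ℕ∞) Z)
    (hK : ContDiff ℝ (⊤ : ℕ∞) K) (p : ℝ × ℝ) (v : ℝ × ℝ) :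
    fderiv ℝ (fun x => g (Z x, K x)) p v
      = fderiv ℝ Z p v * pd1 g (Z p, K p) + fderiv ℝ K p v * pd2 g (Z p, K p) := by
  have hf : HasFDerivAt (fun x => (Z x, K x)) ((fderiv ℝ Z p).prod (fderiv ℝ K p)) p :=
    ((hZ.differentiable (by simp) p).hasFDerivAt).prodMk ((hK.differentiable (by simp) p).hasFDerivAt)
  have hg' : HasFDerivAt g (fderiv ℝ g (Z p, K p)) (Z p, K p) :=
    (hg.differentiable (by simp) _).hasFDerivAt
  rw [show (fun x => g (Z x, K x)) = g ∘ (fun x => (Z x, K x)) from rfl,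
    (hg'.comp p hf).fderiv]
  have : ((fderiv ℝ g (Z p, K p)).comp ((fderiv ℝ Z p).prod (fderiv ℝ K p))) v
      = fderiv ℝ g (Z p, K p) (fderiv ℝ Z p v, fderiv ℝ K p v) := rfl
  rw [this, fderiv_pt]

lemma pd_symm_s5 {g : ℝ × ℝ → ℝ} (hg : ContDiff ℝ (⊤ : ℕ∞) g) (p : ℝ × ℝ) :
    pd2 (pd1 g) p = pd1 (pd2 g) p := by
  have hd : DifferentiableAt ℝ (fderiv ℝ g) p :=
    ((hg.fderiv_right (m := (⊤ : ℕ∞)) (by simp)).differentiable (by simp)) p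
  have h1 : fderiv ℝ (pd1 g) p = (fderiv ℝ (fderiv ℝ g) p).flip (1, 0) := by
    unfold pd1
    rw [fderiv_clm_apply hd (differentiableAt_const _)]
    simp
  have h2 : fderiv ℝ (pd2 g) p = (fderiv ℝ (fderiv ℝ g) p).flip (0, 1) := by
    unfold pd2
    rw [fderiv_clm_apply hd (differentiableAt_const _)]
    simp
  have hs := (ContDiffAt.isSymmSndFDerivAt (hg.contDiffAt (x := p)) (by rw [minSmoothness_of_isRCLikeNormedField]; exact WithTop.coe_le_coe.mpr (le_top : (2 : ℕ∞) ≤ ⊤))) (0,1) (1,0)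
  show fderiv ℝ (pd1 g) p (0,1) = fderiv ℝ (pd2 g) p (1,0)
  rw [h1, h2]
  exact hs


theorem stmt_5 (R Z K ρ : ℝ × ℝ → ℝ) (U : Set (ℝ × ℝ)) (hU : IsOpen U)
    (hR : ContDiff ℝ (⊤ : ℕ∞) R) (hZ : ContDiff ℝ (⊤ : ℕ∞) Z) (hK : ContDiff ℝ (⊤ : ℕ∞) K)
    (hρ : ContDiff ℝ (⊤ : ℕ∞) ρ)
    (h1 : ∀ p ∈ U, pd1 Z p = (1 / 2) * ((pd1 R p) ^ 2 + (R p) ^ 2 * (pd2 R p) ^ 2))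
    (h2 : ∀ p ∈ U, pd2 Z p = pd1 R p * pd2 R p)
    (h3 : ∀ p ∈ U, pd2 K p = pd1 Z p)
    (h4 : ∀ p ∈ U, pd1 K p = (R p) ^ 2 * pd2 Z p)
    (hL : ∀ p ∈ U, (1 / 2) * ((pd1 R p) ^ 2 - (R p) ^ 2 * (pd2 R p) ^ 2) ≠ 0)
    (hcomp : ∀ p ∈ U, ρ (Z p, K p) = R p) :
    ∀ p ∈ U, pd1 (pd1 ρ) (Z p, K p)
      = ρ (Z p, K p) * pd2 (fun q => ρ q * pd2 ρ q) (Z p, K p) := by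
  have dR := hR.differentiable (by simp)
  have dZ := hZ.differentiable (by simp)
  have dK := hK.differentiable (by simp)
  have dρ := hρ.differentiable (by simp)
  have dR1 := diff_pd1 hR
  have dR2 := diff_pd2 hR
  have dρ1 := diff_pd1 hρ
  have dρ2 := diff_pd2 hρ
  have dAF : Differentiable ℝ (fun x => pd1 ρ (Z x, K x)) := fun x =>
    DifferentiableAt.fun_comp' x (dρ1 (Z x, K x)) ((dZ x).prodMk (dK x))
  have dBF : Differentiable ℝ (fun x => pd2 ρ (Z x, K x)) := fun x =>
    DifferentiableAt.fun_comp' x (dρ2 (Z x, K x)) ((dZ x).prodMk (dK x))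
  have dLF : Differentiable ℝ (fun x => 1 / 2 * (pd1 R x * pd1 R x - R x * R x * (pd2 R x * pd2 R x))) :=
    ((dR1.mul dR1).sub ((dR.mul dR).mul (dR2.mul dR2))).const_mul (1 / 2)
  have h1' : ∀ x ∈ U, pd1 Z x = 1 / 2 * (pd1 R x * pd1 R x + R x * R x * (pd2 R x * pd2 R x)) := fun x hx => by
    rw [h1 x hx]; ring
  have h4' : ∀ x ∈ U, pd1 K x = R x * R x * (pd1 R x * pd2 R x) := fun x hx => by
    rw [h4 x hx, h2 x hx]; ring
  -- chain rule for R on U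
  have hRc : ∀ x ∈ U, ∀ v : ℝ × ℝ, fderiv ℝ R x v
      = fderiv ℝ Z x v * pd1 ρ (Z x, K x) + fderiv ℝ K x v * pd2 ρ (Z x, K x) := by
    intro x hx v
    rw [← pd_congr hU hcomp hx]
    exact pd_comp ρ Z K hρ hZ hK x v
  have hLx : ∀ x ∈ U, (1 / 2 * (pd1 R x * pd1 R x - R x * R x * (pd2 R x * pd2 R x))) ≠ 0 := fun x hx h => hL x hx (by linear_combination h)
  have haL : ∀ x ∈ U, pd1 ρ (Z x, K x) * (1 / 2 * (pd1 R x * pd1 R x - R x * R x * (pd2 R x * pd2 R x))) = pd1 R x := by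
    intro x hx
    have e1 : pd1 R x = pd1 Z x * pd1 ρ (Z x, K x) + pd1 K x * pd2 ρ (Z x, K x) :=
      hRc x hx (1, 0)
    have e2 : pd2 R x = pd2 Z x * pd1 ρ (Z x, K x) + pd2 K x * pd2 ρ (Z x, K x) :=
      hRc x hx (0, 1)
    simp only [h3 x hx, h4 x hx, h2 x hx, h1 x hx] at e1 e2
    apply mul_right_cancel₀ (hLx x hx)
    linear_combination (-(1 / 2 * (pd1 R x * pd1 R x + R x * R x * (pd2 R x * pd2 R x)))) * e1
      + (R x * R x * (pd1 R x * pd2 R x)) * e2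
  have hbL : ∀ x ∈ U, pd2 ρ (Z x, K x) * (1 / 2 * (pd1 R x * pd1 R x - R x * R x * (pd2 R x * pd2 R x))) = -(pd2 R x) := by
    intro x hx
    have e1 : pd1 R x = pd1 Z x * pd1 ρ (Z x, K x) + pd1 K x * pd2 ρ (Z x, K x) :=
      hRc x hx (1, 0)
    have e2 : pd2 R x = pd2 Z x * pd1 ρ (Z x, K x) + pd2 K x * pd2 ρ (Z x, K x) :=
      hRc x hx (0, 1)
    simp only [h3 x hx, h4 x hx, h2 x hx, h1 x hx] at e1 e2
    apply mul_right_cancel₀ (hLx x hx)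
    linear_combination (pd1 R x * pd2 R x) * e1
      - (1 / 2 * (pd1 R x * pd1 R x + R x * R x * (pd2 R x * pd2 R x))) * e2
  intro p hp
  have hsR : pd2 (pd1 R) p = pd1 (pd2 R) p := pd_symm_s5 hR p
  have hsρ : pd2 (pd1 ρ) (Z p, K p) = pd1 (pd2 ρ) (Z p, K p) := pd_symm_s5 hρ (Z p, K p)
  -- derivative computations
  have pdF1 : ∀ v : ℝ × ℝ, fderiv ℝ (fun x => 1 / 2 * (pd1 R x * pd1 R x + R x * R x * (pd2 R x * pd2 R x))) p v
      = pd1 R p * fderiv ℝ (pd1 R) p v + R p * fderiv ℝ R p v * (pd2 R p * pd2 R p)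
        + R p * R p * (pd2 R p * fderiv ℝ (pd2 R) p v) := by
    intro v
    have H := ((((dR1 p).hasFDerivAt.fun_mul (dR1 p).hasFDerivAt).fun_add
        (((dR p).hasFDerivAt.fun_mul (dR p).hasFDerivAt).fun_mul
          ((dR2 p).hasFDerivAt.fun_mul (dR2 p).hasFDerivAt))).const_mul (1 / 2 : ℝ))
    rw [H.fderiv]
    simp only [ContinuousLinearMap.add_apply, ContinuousLinearMap.smul_apply, smul_eq_mul]
    ring
  have pdLF : ∀ v : ℝ × ℝ, fderiv ℝ (fun x => 1 / 2 * (pd1 R x * pd1 R x - R x * R x * (pd2 R x * pd2 R x))) p v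
      = pd1 R p * fderiv ℝ (pd1 R) p v - R p * fderiv ℝ R p v * (pd2 R p * pd2 R p)
        - R p * R p * (pd2 R p * fderiv ℝ (pd2 R) p v) := by
    intro v
    have H := ((((dR1 p).hasFDerivAt.fun_mul (dR1 p).hasFDerivAt).fun_sub
        (((dR p).hasFDerivAt.fun_mul (dR p).hasFDerivAt).fun_mul
          ((dR2 p).hasFDerivAt.fun_mul (dR2 p).hasFDerivAt))).const_mul (1 / 2 : ℝ))
    rw [H.fderiv]
    simp only [ContinuousLinearMap.add_apply, ContinuousLinearMap.sub_apply,
      ContinuousLinearMap.smul_apply, smul_eq_mul]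
    ring
  have pdF2 : ∀ v : ℝ × ℝ, fderiv ℝ (fun x => pd1 R x * pd2 R x) p v
      = fderiv ℝ (pd1 R) p v * pd2 R p + pd1 R p * fderiv ℝ (pd2 R) p v :=
    fun v => fderiv_mul_pt (dR1 p) (dR2 p) v
  have pdF4 : ∀ v : ℝ × ℝ, fderiv ℝ (fun x => R x * R x * (pd1 R x * pd2 R x)) p v
      = 2 * (R p * fderiv ℝ R p v) * (pd1 R p * pd2 R p)
        + R p * R p * (fderiv ℝ (pd1 R) p v * pd2 R p + pd1 R p * fderiv ℝ (pd2 R) p v) := by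
    intro v
    have H := (((dR p).hasFDerivAt.fun_mul (dR p).hasFDerivAt).fun_mul
        ((dR1 p).hasFDerivAt.fun_mul (dR2 p).hasFDerivAt))
    rw [H.fderiv]
    simp only [ContinuousLinearMap.add_apply, ContinuousLinearMap.smul_apply, smul_eq_mul]
    ring
  -- Clairaut consequences
  have c1 : fderiv ℝ (pd1 Z) p = fderiv ℝ (fun x => 1 / 2 * (pd1 R x * pd1 R x + R x * R x * (pd2 R x * pd2 R x))) p := pd_congr hU h1' hp
  have c2 : fderiv ℝ (pd2 Z) p = fderiv ℝ (fun x => pd1 R x * pd2 R x) p := pd_congr hU h2 hp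
  have c3 : fderiv ℝ (pd2 K) p = fderiv ℝ (pd1 Z) p := pd_congr hU h3 hp
  have c4 : fderiv ℝ (pd1 K) p = fderiv ℝ (fun x => R x * R x * (pd1 R x * pd2 R x)) p :=
    pd_congr hU h4' hp
  have EZ : pd1 R p * pd2 (pd1 R) p + R p * pd2 R p * (pd2 R p * pd2 R p)
      + R p * R p * (pd2 R p * pd2 (pd2 R) p)
      = pd1 (pd1 R) p * pd2 R p + pd1 R p * pd1 (pd2 R) p := by
    have s := pd_symm_s5 hZ p
    have l1 : pd2 (pd1 Z) p = pd1 R p * pd2 (pd1 R) p + R p * pd2 R p * (pd2 R p * pd2 R p)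
        + R p * R p * (pd2 R p * pd2 (pd2 R) p) := by
      show fderiv ℝ (pd1 Z) p (0, 1) = _
      rw [c1, pdF1 (0, 1)]
      rfl
    have l2 : pd1 (pd2 Z) p = pd1 (pd1 R) p * pd2 R p + pd1 R p * pd1 (pd2 R) p := by
      show fderiv ℝ (pd2 Z) p (1, 0) = _
      rw [c2, pdF2 (1, 0)]
      rfl
    rw [l1, l2] at s
    exact s
  have EK : pd1 R p * pd1 (pd1 R) p + R p * pd1 R p * (pd2 R p * pd2 R p)
      + R p * R p * (pd2 R p * pd1 (pd2 R) p)
      = 2 * (R p * pd2 R p) * (pd1 R p * pd2 R p)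
        + R p * R p * (pd2 (pd1 R) p * pd2 R p + pd1 R p * pd2 (pd2 R) p) := by
    have s := pd_symm_s5 hK p
    have l3 : pd1 (pd2 K) p = pd1 R p * pd1 (pd1 R) p + R p * pd1 R p * (pd2 R p * pd2 R p)
        + R p * R p * (pd2 R p * pd1 (pd2 R) p) := by
      show fderiv ℝ (pd2 K) p (1, 0) = _
      rw [c3, c1, pdF1 (1, 0)]
      rfl
    have l4 : pd2 (pd1 K) p = 2 * (R p * pd2 R p) * (pd1 R p * pd2 R p)
        + R p * R p * (pd2 (pd1 R) p * pd2 R p + pd1 R p * pd2 (pd2 R) p) := by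
      show fderiv ℝ (pd1 K) p (0, 1) = _
      rw [c4, pdF4 (0, 1)]
      rfl
    rw [l3, l4] at s
    exact s.symm
  have hGe : pd1 (pd1 R) p = R p * (pd2 R p * pd2 R p) + R p * R p * pd2 (pd2 R) p := by
    by_cases hrt : pd1 R p = 0
    · have hrm : pd2 R p ≠ 0 := fun h => hL p hp (by rw [hrt, h]; ring)
      exact mul_left_cancel₀ hrm (by linear_combination -EZ + pd1 R p * hsR)
    · exact mul_left_cancel₀ hrt (by linear_combination EK + R p * R p * pd2 R p * hsR)
  -- derivatives of the two first-order relations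
  have EA : ∀ v : ℝ × ℝ, fderiv ℝ (fun x => pd1 ρ (Z x, K x) * (1 / 2 * (pd1 R x * pd1 R x - R x * R x * (pd2 R x * pd2 R x)))) p v
      = (fderiv ℝ Z p v * pd1 (pd1 ρ) (Z p, K p) + fderiv ℝ K p v * pd2 (pd1 ρ) (Z p, K p))
          * (1 / 2 * (pd1 R p * pd1 R p - R p * R p * (pd2 R p * pd2 R p)))
        + pd1 ρ (Z p, K p) * (pd1 R p * fderiv ℝ (pd1 R) p v
          - R p * fderiv ℝ R p v * (pd2 R p * pd2 R p)
          - R p * R p * (pd2 R p * fderiv ℝ (pd2 R) p v)) := by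
    intro v
    have H := (dAF p).hasFDerivAt.fun_mul (dLF p).hasFDerivAt
    rw [H.fderiv]
    simp only [ContinuousLinearMap.add_apply, ContinuousLinearMap.smul_apply, smul_eq_mul]
    rw [pd_comp (pd1 ρ) Z K (contDiff_pd1 hρ) hZ hK p v, pdLF v]
    ring
  have EB : ∀ v : ℝ × ℝ, fderiv ℝ (fun x => pd2 ρ (Z x, K x) * (1 / 2 * (pd1 R x * pd1 R x - R x * R x * (pd2 R x * pd2 R x)))) p v
      = (fderiv ℝ Z p v * pd1 (pd2 ρ) (Z p, K p) + fderiv ℝ K p v * pd2 (pd2 ρ) (Z p, K p))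
          * (1 / 2 * (pd1 R p * pd1 R p - R p * R p * (pd2 R p * pd2 R p)))
        + pd2 ρ (Z p, K p) * (pd1 R p * fderiv ℝ (pd1 R) p v
          - R p * fderiv ℝ R p v * (pd2 R p * pd2 R p)
          - R p * R p * (pd2 R p * fderiv ℝ (pd2 R) p v)) := by
    intro v
    have H := (dBF p).hasFDerivAt.fun_mul (dLF p).hasFDerivAt
    rw [H.fderiv]
    simp only [ContinuousLinearMap.add_apply, ContinuousLinearMap.smul_apply, smul_eq_mul]
    rw [pd_comp (pd2 ρ) Z K (contDiff_pd2 hρ) hZ hK p v, pdLF v]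
    ring
  have ea := pd_congr hU haL hp
  have eb := pd_congr hU hbL hp
  have HG1 : (pd1 Z p * pd1 (pd1 ρ) (Z p, K p) + pd1 K p * pd2 (pd1 ρ) (Z p, K p)) * (1 / 2 * (pd1 R p * pd1 R p - R p * R p * (pd2 R p * pd2 R p)))
      + pd1 ρ (Z p, K p) * (pd1 R p * pd1 (pd1 R) p - R p * pd1 R p * (pd2 R p * pd2 R p)
        - R p * R p * (pd2 R p * pd1 (pd2 R) p)) = pd1 (pd1 R) p := by
    have e' : fderiv ℝ (fun x => pd1 ρ (Z x, K x) * (1 / 2 * (pd1 R x * pd1 R x - R x * R x * (pd2 R x * pd2 R x)))) p (1, 0) = pd1 (pd1 R) p := by rw [ea]; rfl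
    rw [EA (1, 0)] at e'
    exact e'
  have HG2 : (pd2 Z p * pd1 (pd1 ρ) (Z p, K p) + pd2 K p * pd2 (pd1 ρ) (Z p, K p)) * (1 / 2 * (pd1 R p * pd1 R p - R p * R p * (pd2 R p * pd2 R p)))
      + pd1 ρ (Z p, K p) * (pd1 R p * pd2 (pd1 R) p - R p * pd2 R p * (pd2 R p * pd2 R p)
        - R p * R p * (pd2 R p * pd2 (pd2 R) p)) = pd2 (pd1 R) p := by
    have e' : fderiv ℝ (fun x => pd1 ρ (Z x, K x) * (1 / 2 * (pd1 R x * pd1 R x - R x * R x * (pd2 R x * pd2 R x)))) p (0, 1) = pd2 (pd1 R) p := by rw [ea]; rfl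
    rw [EA (0, 1)] at e'
    exact e'
  have HG3 : (pd1 Z p * pd1 (pd2 ρ) (Z p, K p) + pd1 K p * pd2 (pd2 ρ) (Z p, K p)) * (1 / 2 * (pd1 R p * pd1 R p - R p * R p * (pd2 R p * pd2 R p)))
      + pd2 ρ (Z p, K p) * (pd1 R p * pd1 (pd1 R) p - R p * pd1 R p * (pd2 R p * pd2 R p)
        - R p * R p * (pd2 R p * pd1 (pd2 R) p)) = -(pd1 (pd2 R) p) := by
    have e' : fderiv ℝ (fun x => pd2 ρ (Z x, K x) * (1 / 2 * (pd1 R x * pd1 R x - R x * R x * (pd2 R x * pd2 R x)))) p (1, 0) = -(pd1 (pd2 R) p) := by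
      rw [eb, fderiv_neg_pt]
      rfl
    rw [EB (1, 0)] at e'
    exact e'
  have HG4 : (pd2 Z p * pd1 (pd2 ρ) (Z p, K p) + pd2 K p * pd2 (pd2 ρ) (Z p, K p)) * (1 / 2 * (pd1 R p * pd1 R p - R p * R p * (pd2 R p * pd2 R p)))
      + pd2 ρ (Z p, K p) * (pd1 R p * pd2 (pd1 R) p - R p * pd2 R p * (pd2 R p * pd2 R p)
        - R p * R p * (pd2 R p * pd2 (pd2 R) p)) = -(pd2 (pd2 R) p) := by
    have e' : fderiv ℝ (fun x => pd2 ρ (Z x, K x) * (1 / 2 * (pd1 R x * pd1 R x - R x * R x * (pd2 R x * pd2 R x)))) p (0, 1) = -(pd2 (pd2 R) p) := by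
      rw [eb, fderiv_neg_pt]
      rfl
    rw [EB (0, 1)] at e'
    exact e'
  simp only [← hsR] at HG1 HG3
  simp only [← hsρ] at HG3 HG4
  simp only [h3 p hp, h4 p hp, h2 p hp, h1 p hp] at HG1 HG2 HG3 HG4
  have hGa := haL p hp
  have hGb := hbL p hp
  have hRHS : pd2 (fun y => ρ y * pd2 ρ y) (Z p, K p)
      = pd2 ρ (Z p, K p) * pd2 ρ (Z p, K p) + ρ (Z p, K p) * pd2 (pd2 ρ) (Z p, K p) :=
    fderiv_mul_pt (dρ (Z p, K p)) (dρ2 (Z p, K p)) (0, 1)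
  rw [hRHS, hcomp p hp]
  have key : (pd1 (pd1 ρ) (Z p, K p)
      - R p * (pd2 ρ (Z p, K p) * pd2 ρ (Z p, K p) + R p * pd2 (pd2 ρ) (Z p, K p)))
      * (1 / 2 * (pd1 R p * pd1 R p - R p * R p * (pd2 R p * pd2 R p))) ^ 4 = 0 := by
    linear_combination ((1 / 2 * ((pd1 R p) * (pd1 R p) - (R p) * (R p) * ((pd2 R p) * (pd2 R p)))) * (1 / 2 * ((pd1 R p) * (pd1 R p) + (R p) * (R p) * ((pd2 R p) * (pd2 R p))))) * HG1 - ((1 / 2 * ((pd1 R p) * (pd1 R p) - (R p) * (R p) * ((pd2 R p) * (pd2 R p)))) * ((R p) * (R p) * ((pd1 R p) * (pd2 R p)))) * HG2 + ((R p) * (R p) * (1 / 2 * ((pd1 R p) * (pd1 R p) - (R p) * (R p) * ((pd2 R p) * (pd2 R p)))) * ((pd1 R p) * (pd2 R p))) * HG3 - ((R p) * (R p) * (1 / 2 * ((pd1 R p) * (pd1 R p) - (R p) * (R p) * ((pd2 R p) * (pd2 R p)))) * (1 / 2 * ((pd1 R p) * (pd1 R p) + (R p) * (R p) * ((pd2 R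 p) * (pd2 R p))))) * HG4 - (((pd1 R p) * (pd1 (pd1 R) p) - (R p) * (pd1 R p) * ((pd2 R p) * (pd2 R p)) - (R p) * (R p) * ((pd2 R p) * (pd2 (pd1 R) p))) * (1 / 2 * ((pd1 R p) * (pd1 R p) + (R p) * (R p) * ((pd2 R p) * (pd2 R p)))) - ((pd1 R p) * (pd2 (pd1 R) p) - (R p) * (pd2 R p) * ((pd2 R p) * (pd2 R p)) - (R p) * (R p) * ((pd2 R p) * (pd2 (pd2 R) p))) * ((R p) * (R p) * ((pd1 R p) * (pd2 R p)))) * hGa + ((R p) * (R p) * (((pd1 R p) * (pd2 (pd1 R) p) - (R p) * (pd2 R p) * ((pd2 R p) * (pd2 R p)) - (R p) * (R p) * ((pd2 R p) * (pd2 (pd2 R) p))) * (1 / 2 * ((pd1 R p) * (pd1 R p) + (R p) * (R p) * ((pd2 R p) * (pd2 R p)))) - ((pd1 R p) * (pd1 (pd1 R) p) - (R p) * (pd1 R p) * ((pd2 R p) * (pd2 R p)) - (R p) * (R p) * ((pd2 R p) * (pd2 (pd1 R) p))) * ((pd1 R p) * (pd2 R p))) - (R p) * (1 / 2 * ((pd1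 R p) * (pd1 R p) - (R p) * (R p) * ((pd2 R p) * (pd2 R p)))) * (1 / 2 * ((pd1 R p) * (pd1 R p) - (R p) * (R p) * ((pd2 R p) * (pd2 R p)))) * ((pd2 ρ (Z p, K p)) * (1 / 2 * ((pd1 R p) * (pd1 R p) - (R p) * (R p) * ((pd2 R p) * (pd2 R p)))) - (pd2 R p))) * hGb + ((1 / 2 * ((pd1 R p) * (pd1 R p) + (R p) * (R p) * ((pd2 R p) * (pd2 R p)))) * ((1 / 2 * ((pd1 R p) * (pd1 R p) - (R p) * (R p) * ((pd2 R p) * (pd2 R p)))) - (pd1 R p) * (pd1 R p)) + (R p) * (R p) * ((pd2 R p) * (pd2 R p)) * ((pd1 R p) * (pd1 R p))) * hGe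
  rcases mul_eq_zero.mp key with h | h
  · linarith
  · exact absurd h (pow_ne_zero 4 (hLx p hp))
end

section
/- Involutivity identity: under the hypotheses of Theorem 2, at corresponding points one has (1/2)((∂_ζρ)² − ρ²(∂_κρ)²) · (1/2)((∂_τR)² − R²(∂_μR)²) = 1. -/
lemma clm_eval (L : ℝ × ℝ →L[ℝ] ℝ) (a b : ℝ) : L (a, b) = a * L (1, 0) + b * L (0, 1) := by
  have h : (a, b) = a • ((1 : ℝ), (0 : ℝ)) + b • ((0 : ℝ), (1 : ℝ)) := by
    simp [Prod.ext_iff]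
  rw [h, map_add, map_smul, map_smul, smul_eq_mul, smul_eq_mul]

theorem stmt_7 (R Z K ρ : ℝ × ℝ → ℝ) (U : Set (ℝ × ℝ)) (hU : IsOpen U)
    (hR : ContDiff ℝ (⊤ : ℕ∞) R) (hZ : ContDiff ℝ (⊤ : ℕ∞) Z) (hK : ContDiff ℝ (⊤ : ℕ∞) K)
    (hρ : ContDiff ℝ (⊤ : ℕ∞) ρ)
    (h1 : ∀ p ∈ U, pd1 Z p = (1 / 2) * ((pd1 R p) ^ 2 + (R p) ^ 2 * (pd2 R p) ^ 2))
    (h2 : ∀ p ∈ U, pd2 Z p = pd1 R p * pd2 R p)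
    (h3 : ∀ p ∈ U, pd2 K p = pd1 Z p)
    (h4 : ∀ p ∈ U, pd1 K p = (R p) ^ 2 * pd2 Z p)
    (hL : ∀ p ∈ U, (1 / 2) * ((pd1 R p) ^ 2 - (R p) ^ 2 * (pd2 R p) ^ 2) ≠ 0)
    (hcomp : ∀ p ∈ U, ρ (Z p, K p) = R p) :
    ∀ p ∈ U,
      (1 / 2) * ((pd1 ρ (Z p, K p)) ^ 2 - (ρ (Z p, K p)) ^ 2 * (pd2 ρ (Z p, K p)) ^ 2)
        * ((1 / 2) * ((pd1 R p) ^ 2 - (R p) ^ 2 * (pd2 R p) ^ 2)) = 1 := by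
  intro p hp
  -- chain rule
  have hgd : HasFDerivAt (fun q => (Z q, K q))
      ((fderiv ℝ Z p).prod (fderiv ℝ K p)) p :=
    HasFDerivAt.prodMk ((hZ.differentiable (by simp) p).hasFDerivAt) ((hK.differentiable (by simp) p).hasFDerivAt)
  have hcd : HasFDerivAt (fun q => ρ (Z q, K q))
      ((fderiv ℝ ρ (Z p, K p)).comp ((fderiv ℝ Z p).prod (fderiv ℝ K p))) p :=
    ((hρ.differentiable (by simp) (Z p, K p)).hasFDerivAt).comp p hgd
  have heq : (fun q => ρ (Z q, K q)) =ᶠ[nhds p] R :=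
    Filter.eventuallyEq_of_mem (hU.mem_nhds hp) (fun q hq => hcomp q hq)
  have hfd : fderiv ℝ R p
      = (fderiv ℝ ρ (Z p, K p)).comp ((fderiv ℝ Z p).prod (fderiv ℝ K p)) := by
    rw [← heq.fderiv_eq, hcd.fderiv]
  set x := pd1 ρ (Z p, K p) with hx
  set y := pd2 ρ (Z p, K p) with hy
  have e1 : pd1 R p = pd1 Z p * x + pd1 K p * y := by
    simp only [pd1, hfd, ContinuousLinearMap.comp_apply, ContinuousLinearMap.prod_apply]
    exact clm_eval _ _ _
  have e2 : pd2 R p = pd2 Z p * x + pd2 K p * y := by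
    simp only [pd2, hfd, ContinuousLinearMap.comp_apply, ContinuousLinearMap.prod_apply]
    exact clm_eval _ _ _
  simp only [h3 p hp, h4 p hp, h2 p hp, h1 p hp] at e1 e2
  set rτ := pd1 R p
  set rμ := pd2 R p
  set r := R p
  have hLp := hL p hp
  rw [hcomp p hp]
  have key : (x ^ 2 - r ^ 2 * y ^ 2) * ((1 / 2) * (rτ ^ 2 - r ^ 2 * rμ ^ 2)) ^ 2
      = 2 * ((1 / 2) * (rτ ^ 2 - r ^ 2 * rμ ^ 2)) := by
    linear_combination (-((1 / 2) * (rτ ^ 2 + r ^ 2 * rμ ^ 2) * x + r ^ 2 * (rτ * rμ) * y + rτ)) * e1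
      + r ^ 2 * ((rτ * rμ) * x + (1 / 2) * (rτ ^ 2 + r ^ 2 * rμ ^ 2) * y + rμ) * e2
  have key2 : ((x ^ 2 - r ^ 2 * y ^ 2) * ((1 / 2) * (rτ ^ 2 - r ^ 2 * rμ ^ 2)))
      * ((1 / 2) * (rτ ^ 2 - r ^ 2 * rμ ^ 2))
      = 2 * ((1 / 2) * (rτ ^ 2 - r ^ 2 * rμ ^ 2)) := by ring_nf; ring_nf at key; linarith
  have := mul_right_cancel₀ hLp key2
  linarith
end

section
/- Explicit solution with parameter ε: for any constant ε, the functions R(τ,μ) = √2·√(μ²+ε)/τ, ζ(τ,μ) = −(μ²+ε/3)/τ³, κ(τ,μ) = (μ³+εμ)/τ⁴, defined where τ ≠ 0 and μ²+ε > 0, satisfy ∂_τζ = (1/2)((∂_τR)² + R²(∂_μR)²), ∂_μζ = ∂_τR·∂_μR, ∂_μκ = ∂_τζ, ∂_τκ = R²·∂_μζ. -/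
/-! Each of `R`, `Z`, `K` has the separated form `v μ / τ ^ n`, so its partial derivatives are
explicit; after `√2 ^ 2 = 2` and `√(μ ^ 2 + ε) ^ 2 = μ ^ 2 + ε` the four equations become
polynomial identities in `τ`, `μ`, `ε`. -/

open ContinuousLinearMap

theorem hasDerivAt_inv_pow (n : ℕ) {x : ℝ} (hx : x ≠ 0) :
    HasDerivAt (fun t => (t ^ n)⁻¹) (-(n / x ^ (n + 1))) x := by
  refine ((hasDerivAt_pow n x).inv (pow_ne_zero n hx)).congr_deriv ?_
  cases n with
  | zero => simp
  | succ k => rw [Nat.add_sub_cancel]; field_simp; ring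

theorem hasDerivAt_sqrt_sq_add (c : ℝ) {x : ℝ} (hx : x ^ 2 + c ≠ 0) :
    HasDerivAt (fun t => √(t ^ 2 + c)) (x / √(x ^ 2 + c)) x := by
  refine (((hasDerivAt_pow 2 x).add_const c).sqrt hx).congr_deriv ?_
  field_simp
  ring

section SeparableProduct

variable {u v : ℝ → ℝ} {u' v' : ℝ} {p : ℝ × ℝ}

theorem hasFDerivAt_comp_fst_mul_comp_snd (hu : HasDerivAt u u' p.1) (hv : HasDerivAt v v' p.2) :
    HasFDerivAt (fun q : ℝ × ℝ => u q.1 * v q.2)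
      (u p.1 • v' • snd ℝ ℝ ℝ + v p.2 • u' • fst ℝ ℝ ℝ) p :=
  (hu.comp_hasFDerivAt p hasFDerivAt_fst).mul (hv.comp_hasFDerivAt p hasFDerivAt_snd)

theorem pd1_mul_of_hasDerivAt (hu : HasDerivAt u u' p.1) (hv : DifferentiableAt ℝ v p.2) :
    pd1 (fun q : ℝ × ℝ => u q.1 * v q.2) p = u' * v p.2 := by
  rw [pd1, (hasFDerivAt_comp_fst_mul_comp_snd hu hv.hasDerivAt).fderiv]
  simp [mul_comm]

theorem pd2_mul_of_hasDerivAt (hu : DifferentiableAt ℝ u p.1) (hv : HasDerivAt v v' p.2) :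
    pd2 (fun q : ℝ × ℝ => u q.1 * v q.2) p = u p.1 * v' := by
  rw [pd2, (hasFDerivAt_comp_fst_mul_comp_snd hu.hasDerivAt hv).fderiv]
  simp

theorem pd1_div_pow (n : ℕ) (hp : p.1 ≠ 0) (hv : DifferentiableAt ℝ v p.2) :
    pd1 (fun q : ℝ × ℝ => v q.2 / q.1 ^ n) p = -(n * v p.2 / p.1 ^ (n + 1)) := by
  simp_rw [div_eq_inv_mul]
  rw [pd1_mul_of_hasDerivAt (hasDerivAt_inv_pow n hp) hv]
  ring

theorem pd2_div_pow (n : ℕ) (hp : p.1 ≠ 0) (hv : HasDerivAt v v' p.2) :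
    pd2 (fun q : ℝ × ℝ => v q.2 / q.1 ^ n) p = v' / p.1 ^ n := by
  simp_rw [div_eq_inv_mul]
  exact pd2_mul_of_hasDerivAt (hasDerivAt_inv_pow n hp).differentiableAt hv

end SeparableProduct

theorem stmt_13 (ε : ℝ) :
    let R : ℝ × ℝ → ℝ := fun p => Real.sqrt 2 * Real.sqrt (p.2 ^ 2 + ε) / p.1
    let Z : ℝ × ℝ → ℝ := fun p => -((p.2 ^ 2 + ε / 3) / p.1 ^ 3)
    let K : ℝ × ℝ → ℝ := fun p => (p.2 ^ 3 + ε * p.2) / p.1 ^ 4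
    ∀ p : ℝ × ℝ, p.1 ≠ 0 → p.2 ^ 2 + ε > 0 →
      pd1 Z p = (1 / 2) * ((pd1 R p) ^ 2 + (R p) ^ 2 * (pd2 R p) ^ 2) ∧
      pd2 Z p = pd1 R p * pd2 R p ∧
      pd2 K p = pd1 Z p ∧
      pd1 K p = (R p) ^ 2 * pd2 Z p := by
  intro R Z K p hτ hμ
  have hR : R = fun q => √2 * √(q.2 ^ 2 + ε) / q.1 ^ 1 := by simp only [R, pow_one]
  have hZ : Z = fun q => -(q.2 ^ 2 + ε / 3) / q.1 ^ 3 := by simp only [Z, neg_div]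
  have hvR : HasDerivAt (fun μ => √2 * √(μ ^ 2 + ε)) (√2 * (p.2 / √(p.2 ^ 2 + ε))) p.2 :=
    (hasDerivAt_sqrt_sq_add ε hμ.ne').const_mul _
  have hvZ : HasDerivAt (fun μ => -(μ ^ 2 + ε / 3)) (-(2 * p.2)) p.2 :=
    ((hasDerivAt_pow 2 p.2).add_const (ε / 3)).neg.congr_deriv (by norm_num)
  have hvK : HasDerivAt (fun μ => μ ^ 3 + ε * μ) (3 * p.2 ^ 2 + ε) p.2 :=
    ((hasDerivAt_pow 3 p.2).add ((hasDerivAt_id p.2).const_mul ε)).congr_deriv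
      (by norm_num)
  rw [hR, hZ, pd1_div_pow 1 hτ hvR.differentiableAt, pd2_div_pow 1 hτ hvR,
    pd1_div_pow 3 hτ hvZ.differentiableAt, pd2_div_pow 3 hτ hvZ,
    pd1_div_pow 4 hτ hvK.differentiableAt, pd2_div_pow 4 hτ hvK]
  have hs : √(p.2 ^ 2 + ε) ^ 2 = p.2 ^ 2 + ε := Real.sq_sqrt hμ.le
  have h2 : √2 ^ 2 = 2 := Real.sq_sqrt zero_le_two
  push_cast
  refine ⟨?_, ?_, ?_, ?_⟩ <;> field_simp <;> simp only [hs, h2] <;> ring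
end

section
/- Polynomial solution verification: for any constant ε, let R(τ,μ) = √2·√(μ²+ε)/τ and ζ(τ,μ) = −(μ²+ε/3)/τ³, and set Z = τ − ζ/2 and T = τ + ζ/2; then the point (T, R, Z) satisfies (T² + R² − Z²)(T + Z)² = 16ε/3 identically in (τ,μ) with τ ≠ 0, μ² + ε > 0. -/
theorem stmt_14 (ε τ μ : ℝ) (hτ : τ ≠ 0) (hε : μ ^ 2 + ε > 0) :
    let R : ℝ := Real.sqrt 2 * Real.sqrt (μ ^ 2 + ε) / τ
    let Z : ℝ := -((μ ^ 2 + ε / 3) / τ ^ 3)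
    let T : ℝ := τ + Z / 2
    let z : ℝ := τ - Z / 2
    (T ^ 2 + R ^ 2 - z ^ 2) * (T + z) ^ 2 = 16 * ε / 3 := by
  intro R Z T z
  have h2 : (Real.sqrt 2) ^ 2 = 2 := Real.sq_sqrt (by norm_num)
  have h3 : (Real.sqrt (μ ^ 2 + ε)) ^ 2 = μ ^ 2 + ε := Real.sq_sqrt hε.le
  have hR : R ^ 2 = 2 * (μ ^ 2 + ε) / τ ^ 2 := by
    simp only [R, div_pow, mul_pow, h2, h3]
  simp only [T, z, Z, hR]
  field_simp
  ring
end

section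
/- Elliptic solution: let F : I → ℝ be a smooth function on an open interval satisfying (F')² = F⁴ + 1. Then R(τ,μ) = √2·F(τ)·μ, ζ(τ,μ) = F(τ)·F'(τ)·μ², κ(τ,μ) = F(τ)⁴·μ³ + μ³/3 satisfy ∂_τζ = (1/2)((∂_τR)² + R²(∂_μR)²), ∂_μζ = ∂_τR·∂_μR, ∂_μκ = ∂_τζ, and ∂_τκ = R²·∂_μζ on I × ℝ. -/
lemma pd_split (g h : ℝ → ℝ) (p : ℝ × ℝ) (a b : ℝ)
    (hg : HasDerivAt g a p.1) (hh : HasDerivAt h b p.2) :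
    pd1 (fun q : ℝ × ℝ => g q.1 * h q.2) p = a * h p.2 ∧
    pd2 (fun q : ℝ × ℝ => g q.1 * h q.2) p = g p.1 * b := by
  have hG : HasFDerivAt (fun q : ℝ × ℝ => g q.1)
      ((ContinuousLinearMap.smulRight (1 : ℝ →L[ℝ] ℝ) a).comp
        (ContinuousLinearMap.fst ℝ ℝ ℝ)) p :=
    hg.hasFDerivAt.comp p hasFDerivAt_fst
  have hH : HasFDerivAt (fun q : ℝ × ℝ => h q.2)
      ((ContinuousLinearMap.smulRight (1 : ℝ →L[ℝ] ℝ) b).comp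
        (ContinuousLinearMap.snd ℝ ℝ ℝ)) p :=
    hh.hasFDerivAt.comp p hasFDerivAt_snd
  have hM := hG.mul hH
  constructor
  · rw [pd1, HasFDerivAt.fderiv (f := fun q : ℝ × ℝ => g q.1 * h q.2) hM]
    simp [ContinuousLinearMap.smulRight_apply]
    ring
  · rw [pd2, HasFDerivAt.fderiv (f := fun q : ℝ × ℝ => g q.1 * h q.2) hM]
    simp [ContinuousLinearMap.smulRight_apply]

theorem stmt_16 (F : ℝ → ℝ) (I : Set ℝ) (hI : IsOpen I) (hI' : I.OrdConnected)
    (hF : ContDiff ℝ (⊤ : ℕ∞) F)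
    (hode : ∀ τ ∈ I, (deriv F τ) ^ 2 = (F τ) ^ 4 + 1) :
    let R : ℝ × ℝ → ℝ := fun p => Real.sqrt 2 * F p.1 * p.2
    let Z : ℝ × ℝ → ℝ := fun p => F p.1 * deriv F p.1 * p.2 ^ 2
    let K : ℝ × ℝ → ℝ := fun p => (F p.1) ^ 4 * p.2 ^ 3 + p.2 ^ 3 / 3
    ∀ p : ℝ × ℝ, p.1 ∈ I →
      pd1 Z p = (1 / 2) * ((pd1 R p) ^ 2 + (R p) ^ 2 * (pd2 R p) ^ 2) ∧
      pd2 Z p = pd1 R p * pd2 R p ∧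
      pd2 K p = pd1 Z p ∧
      pd1 K p = (R p) ^ 2 * pd2 Z p := by
  intro R Z K p hp
  have hF1 : Differentiable ℝ F := hF.differentiable (by simp)
  have hF'c : ContDiff ℝ (⊤ : ℕ∞) (deriv F) := (contDiff_infty_iff_deriv.mp (hF.of_le (by simp))).2
  have hF' : Differentiable ℝ (deriv F) := hF'c.differentiable (by simp)
  set τ := p.1
  set μ := p.2
  have hFd : HasDerivAt F (deriv F τ) τ := (hF1 τ).hasDerivAt
  have hF'd : HasDerivAt (deriv F) (deriv (deriv F) τ) τ := (hF' τ).hasDerivAt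
  -- F'' = 2 F^3 on I
  have hne : deriv F τ ≠ 0 := by
    intro h; have := hode τ hp; rw [h] at this
    nlinarith [pow_le_pow_left₀ (by positivity : (0:ℝ) ≤ F τ ^ 2) (le_refl (F τ ^ 2)) 1,
      sq_nonneg (F τ ^ 2)]
  have heq : (fun t => (deriv F t) ^ 2) =ᶠ[nhds τ] fun t => F t ^ 4 + 1 :=
    Filter.eventually_of_mem (hI.mem_nhds hp) hode
  have hd1 : deriv (fun t => (deriv F t) ^ 2) τ = 2 * deriv F τ * deriv (deriv F) τ := by
    rw [HasDerivAt.deriv (f := fun t => (deriv F t) ^ 2) (hF'd.pow 2)]; push_cast; ring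
  have hd2 : deriv (fun t => F t ^ 4 + 1) τ = 4 * F τ ^ 3 * deriv F τ := by
    rw [HasDerivAt.deriv (f := fun t => F t ^ 4 + 1) ((hFd.pow 4).add_const 1)]; push_cast; ring
  have hF'' : deriv (deriv F) τ = 2 * F τ ^ 3 := by
    have h := heq.deriv_eq
    rw [hd1, hd2] at h
    have h' : deriv F τ * deriv (deriv F) τ = deriv F τ * (2 * F τ ^ 3) := by
      linear_combination h / 2
    exact mul_left_cancel₀ hne h'
  -- derivatives of the factor functions
  have hgR : HasDerivAt (fun t => Real.sqrt 2 * F t) (Real.sqrt 2 * deriv F τ) τ :=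
    hFd.const_mul _
  have hhR : HasDerivAt (fun x : ℝ => x) 1 μ := hasDerivAt_id μ
  have hgZ : HasDerivAt (fun t => F t * deriv F t)
      (deriv F τ * deriv F τ + F τ * (2 * F τ ^ 3)) τ := by
    have := hFd.mul hF'd
    rwa [hF''] at this
  have hhZ : HasDerivAt (fun x : ℝ => x ^ 2) (2 * μ) μ := by
    simpa using hasDerivAt_pow 2 μ
  have hgK : HasDerivAt (fun t => F t ^ 4 + 1 / 3) (4 * F τ ^ 3 * deriv F τ) τ := by
    simpa using (hFd.pow 4).add_const (1 / 3)
  have hhK : HasDerivAt (fun x : ℝ => x ^ 3) (3 * μ ^ 2) μ := by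
    simpa using hasDerivAt_pow 3 μ
  have hR := pd_split (fun t => Real.sqrt 2 * F t) (fun x => x) p _ _ hgR hhR
  have hZ := pd_split (fun t => F t * deriv F t) (fun x => x ^ 2) p _ _ hgZ hhZ
  have hKfun : K = fun q : ℝ × ℝ => (fun t => F t ^ 4 + 1 / 3) q.1 * (fun x => x ^ 3) q.2 := by
    funext q; show F q.1 ^ 4 * q.2 ^ 3 + q.2 ^ 3 / 3 = _; ring
  have hK := pd_split (fun t => F t ^ 4 + 1 / 3) (fun x => x ^ 3) p _ _ hgK hhK
  have hR1 : pd1 R p = Real.sqrt 2 * deriv F τ * μ := hR.1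
  have hR2 : pd2 R p = Real.sqrt 2 * F τ := by
    have := hR.2; simpa using this
  have hZ1 : pd1 Z p = (deriv F τ * deriv F τ + F τ * (2 * F τ ^ 3)) * μ ^ 2 := hZ.1
  have hZ2 : pd2 Z p = F τ * deriv F τ * (2 * μ) := hZ.2
  have hK1 : pd1 K p = 4 * F τ ^ 3 * deriv F τ * μ ^ 3 := by rw [hKfun]; exact hK.1
  have hK2 : pd2 K p = (F τ ^ 4 + 1 / 3) * (3 * μ ^ 2) := by rw [hKfun]; exact hK.2
  have h2 : Real.sqrt 2 ^ 2 = 2 := Real.sq_sqrt (by norm_num)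
  have hRv : R p = Real.sqrt 2 * F τ * μ := rfl
  have hodeτ := hode τ hp
  refine ⟨?_, ?_, ?_, ?_⟩
  · rw [hZ1, hR1, hR2, hRv]
    linear_combination (-(deriv F τ) ^ 2 * μ ^ 2 / 2 -
      F τ ^ 4 * μ ^ 2 * (Real.sqrt 2 ^ 2 + 2) / 2) * h2
  · rw [hZ2, hR1, hR2]
    linear_combination (-(F τ) * deriv F τ * μ) * h2
  · rw [hK2, hZ1]
    linear_combination (-μ ^ 2) * hodeτ
  · rw [hK1, hZ2, hRv]
    linear_combination (-2 * F τ ^ 3 * deriv F τ * μ ^ 3) * h2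
end
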